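/- For every perfect matching M of the infinite grid graph on Z^2, a height function for M exists; moreover it is unique up to an additive constant: if h and h' are both height functions for M, then there is an integer c with h'(x) = h(x) + c for every plaquette x. -/

import Mathlib

/-!
Dimer configurations (perfect matchings) on the infinite square grid `ℤ × ℤ` and their
height functions.

* A vertex is a point of `ℤ × ℤ`; the grid edge `(v, i)` joins `v` and `v + e i`, where
  `e 0 = (1,0)` and `e 1 = (0,1)`.
* A plaquette is a point `p : ℤ × ℤ`, regarded as the unit square with corners
  `p, p+e 0, p+e 1, p+e 0+e 1`.
* A height function for a perfect matching `M` assigns an integer to every plaquette so that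
  crossing a grid edge, keeping the even endpoint of that edge on the right, the height
  increases by `1` across an unoccupied edge and decreases by `3` across an occupied one.
-/

open scoped Classical
noncomputable section

namespace HQDM

/-- Vertices (and also plaquettes) of the infinite grid. -/
abbrev V : Type := ℤ × ℤ

/-- Grid edges: `(v, i)` is the edge joining `v` and `v + e i`. -/
abbrev E : Type := V × Fin 2

/-- The two unit vectors. -/
def e : Fin 2 → V := fun i => if i = 0 then (1, 0) else (0, 1)

/-- The endpoints of an edge. -/
def ends (ed : E) : Set V := {ed.1, ed.1 + e ed.2}

/-- `M` is a perfect matching of the grid graph: every vertex lies on exactly one edge of `M`. -/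
def IsPM (M : Set E) : Prop := ∀ w : V, ∃! ed : E, ed ∈ M ∧ w ∈ ends ed

/-- Sign of a vertex: `1` on even vertices, `-1` on odd ones. -/
def eps (v : V) : ℤ := if Even (v.1 + v.2) then 1 else -1

/-- `h : ℤ × ℤ → ℤ` is a height function for the matching `M`.  The two conditions encode, for
the horizontal edge `(v, 0)` (separating plaquette `v` above from plaquette `v - (0,1)` below)
and the vertical edge `(v, 1)` (separating plaquette `v` on the right from plaquette `v - (1,0)`
on the left), the rule: crossing a grid edge keeping its even endpoint on the right, the height
changes by `+1` across an unoccupied edge and by `-3` across an occupied one. -/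
def IsHeight (M : Set E) (h : V → ℤ) : Prop :=
  ∀ v : V,
    h (v - (0, 1)) - h v = (if (v, (0 : Fin 2)) ∈ M then (-3 : ℤ) else 1) * eps v ∧
    h (v - (1, 0)) - h v = (if (v, (1 : Fin 2)) ∈ M then (3 : ℤ) else -1) * eps v

/-- Plaquette `p` hosts a horizontal parallel dimer pair in `M`. -/
def HostsH (M : Set E) (p : V) : Prop :=
  (p, (0 : Fin 2)) ∈ M ∧ (p + (0, 1), (0 : Fin 2)) ∈ M

/-- Plaquette `p` hosts a vertical parallel dimer pair in `M`. -/
def HostsV (M : Set E) (p : V) : Prop :=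
  (p, (1 : Fin 2)) ∈ M ∧ (p + (1, 0), (1 : Fin 2)) ∈ M

/-- Plaquette `p` hosts a parallel pair (horizontal or vertical); i.e. `p` is flippable. -/
def HostsPar (M : Set E) (p : V) : Prop := HostsH M p ∨ HostsV M p

/-- The four boundary edges of the plaquette `p`. -/
def plaqEdges (p : V) : Set E :=
  {(p, (0 : Fin 2)), (p + (0, 1), (0 : Fin 2)), (p, (1 : Fin 2)), (p + (1, 0), (1 : Fin 2))}

/-- Flipping the plaquette `p`: the horizontal pair is replaced by the vertical one, or
vice versa (as a set operation, the symmetric difference with the plaquette's boundary). -/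
def flip (M : Set E) (p : V) : Set E := symmDiff M (plaqEdges p)

/-- `{p, p + 2 e i}` is a flippable pair of `M`: one of the two plaquettes hosts a horizontal
pair and the other a vertical pair. -/
def FlipPair (M : Set E) (p : V) (i : Fin 2) : Prop :=
  (HostsH M p ∧ HostsV M (p + e i + e i)) ∨ (HostsV M p ∧ HostsH M (p + e i + e i))

/-- The hQDM move at the pair `{p, p + 2 e i}`: both plaquettes are flipped. -/
def move (M : Set E) (p : V) (i : Fin 2) : Set E :=
  symmDiff M (plaqEdges p ∪ plaqEdges (p + e i + e i))

end HQDM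

namespace HQDM

/-- Discrete antiderivative: `sumAux d 0 = 0` and `sumAux d (n+1) = sumAux d n + d (n+1)`. -/
def sumAux (d : ℤ → ℤ) (n : ℤ) : ℤ :=
  (∑ k ∈ Finset.range n.toNat, d (k + 1)) - ∑ k ∈ Finset.range (-n).toNat, d (-(k : ℤ))

lemma sumAux_zero (d : ℤ → ℤ) : sumAux d 0 = 0 := by simp [sumAux]

lemma sumAux_step (d : ℤ → ℤ) (n : ℤ) : sumAux d (n + 1) = sumAux d n + d (n + 1) := by
  unfold sumAux
  rcases le_or_gt 0 n with h | h
  · have h1 : (n + 1).toNat = n.toNat + 1 := by omega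
    have h2 : (-n).toNat = 0 := by omega
    have h3 : (-(n + 1)).toNat = 0 := by omega
    have h4 : d ((n.toNat : ℤ) + 1) = d (n + 1) := by
      rw [show ((n.toNat : ℤ)) = n from by omega]
    rw [h1, h2, h3, Finset.sum_range_succ, h4]
    simp
  · have h1 : (n + 1).toNat = 0 := by omega
    have h2 : n.toNat = 0 := by omega
    have h3 : (-n).toNat = (-(n + 1)).toNat + 1 := by omega
    have h4 : -(((-(n + 1)).toNat : ℤ)) = n + 1 := by omega
    rw [h1, h2, h3, Finset.sum_range_succ, h4]
    simp

/-- Height increment across the horizontal edge `(v,0)`. -/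
def D0 (M : Set E) (v : V) : ℤ := (if (v, (0 : Fin 2)) ∈ M then (-3 : ℤ) else 1) * eps v

/-- Height increment across the vertical edge `(v,1)`. -/
def D1 (M : Set E) (v : V) : ℤ := (if (v, (1 : Fin 2)) ∈ M then (3 : ℤ) else -1) * eps v

lemma eps_left (x y : ℤ) : eps (x - 1, y) = -eps (x, y) := by
  simp only [eps, Int.even_iff]
  split_ifs with h1 h2 <;> omega

lemma eps_down (x y : ℤ) : eps (x, y - 1) = -eps (x, y) := by
  simp only [eps, Int.even_iff]
  split_ifs with h1 h2 <;> omega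

/-- Exactly one of the four edges incident to the vertex `(x,y)` is in `M`. -/
lemma vertexSum (M : Set E) (hM : IsPM M) (x y : ℤ) :
    (if (((x, y) : V), (0 : Fin 2)) ∈ M then (-3 : ℤ) else 1)
      + (if (((x, y) : V), (1 : Fin 2)) ∈ M then (-3 : ℤ) else 1)
      + (if (((x - 1, y) : V), (0 : Fin 2)) ∈ M then (-3 : ℤ) else 1)
      + (if (((x, y - 1) : V), (1 : Fin 2)) ∈ M then (-3 : ℤ) else 1) = 0 := by
  obtain ⟨ed, ⟨hm, hw⟩, huniq⟩ := hM (x, y)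
  have key : ∀ ed' : E, ed' ∈ M → ((x, y) : V) ∈ ends ed' → ed' = ed :=
    fun ed' h1 h2 => huniq ed' ⟨h1, h2⟩
  have memR : ((x, y) : V) ∈ ends ((x, y), (0 : Fin 2)) := by
    left; rfl
  have memU : ((x, y) : V) ∈ ends ((x, y), (1 : Fin 2)) := by
    left; rfl
  have memL : ((x, y) : V) ∈ ends ((x - 1, y), (0 : Fin 2)) := by
    right
    show ((x, y) : V) = (x - 1, y) + e 0
    simp [e, Prod.ext_iff]
  have memD : ((x, y) : V) ∈ ends ((x, y - 1), (1 : Fin 2)) := by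
    right
    show ((x, y) : V) = (x, y - 1) + e 1
    simp [e, Prod.ext_iff]
  obtain ⟨⟨p, q⟩, i⟩ := ed
  fin_cases i
  · -- horizontal edge
    rcases hw with hw | hw
    · -- ed = ((x,y),0)
      rw [show ((p, q) : V) = (x, y) from hw.symm] at hm key
      have hU : (((x, y) : V), (1 : Fin 2)) ∉ M := fun hmem => by
        have := key _ hmem memU; simp at this
      have hL : (((x - 1, y) : V), (0 : Fin 2)) ∉ M := fun hmem => by
        have := key _ hmem memL; simp [Prod.ext_iff] at this; try omega
      have hD : (((x, y - 1) : V), (1 : Fin 2)) ∉ M := fun hmem => by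
        have := key _ hmem memD; simp [Prod.ext_iff] at this
      rw [if_pos (show (((x, y) : V), (0 : Fin 2)) ∈ M from hm), if_neg hU, if_neg hL, if_neg hD]; ring
    · -- (x,y) = (p,q) + (1,0), so ed = ((x-1,y),0)
      have hw' : ((p, q) : V) = (x - 1, y) := by
        have : ((x, y) : V) = (p + 1, q + 0) := by
          simpa [e, Prod.ext_iff] using hw
        simp [Prod.ext_iff] at this ⊢; omega
      rw [hw'] at hm key
      have hR : (((x, y) : V), (0 : Fin 2)) ∉ M := fun hmem => by
        have := key _ hmem memR; simp [Prod.ext_iff] at this; try omega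
      have hU : (((x, y) : V), (1 : Fin 2)) ∉ M := fun hmem => by
        have := key _ hmem memU; simp [Prod.ext_iff] at this
      have hD : (((x, y - 1) : V), (1 : Fin 2)) ∉ M := fun hmem => by
        have := key _ hmem memD; simp [Prod.ext_iff] at this
      rw [if_neg hR, if_neg hU, if_pos (show (((x - 1, y) : V), (0 : Fin 2)) ∈ M from hm), if_neg hD]; ring
  · -- vertical edge
    rcases hw with hw | hw
    · rw [show ((p, q) : V) = (x, y) from hw.symm] at hm key
      have hR : (((x, y) : V), (0 : Fin 2)) ∉ M := fun hmem => by
        have := key _ hmem memR; simp at this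
      have hL : (((x - 1, y) : V), (0 : Fin 2)) ∉ M := fun hmem => by
        have := key _ hmem memL; simp [Prod.ext_iff] at this
      have hD : (((x, y - 1) : V), (1 : Fin 2)) ∉ M := fun hmem => by
        have := key _ hmem memD; simp [Prod.ext_iff] at this; try omega
      rw [if_neg hR, if_pos (show (((x, y) : V), (1 : Fin 2)) ∈ M from hm), if_neg hL, if_neg hD]; ring
    · have hw' : ((p, q) : V) = (x, y - 1) := by
        have : ((x, y) : V) = (p + 0, q + 1) := by
          simpa [e, Prod.ext_iff] using hw
        simp [Prod.ext_iff] at this ⊢; omega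
      rw [hw'] at hm key
      have hR : (((x, y) : V), (0 : Fin 2)) ∉ M := fun hmem => by
        have := key _ hmem memR; simp [Prod.ext_iff] at this
      have hU : (((x, y) : V), (1 : Fin 2)) ∉ M := fun hmem => by
        have := key _ hmem memU; simp [Prod.ext_iff] at this; try omega
      have hL : (((x - 1, y) : V), (0 : Fin 2)) ∉ M := fun hmem => by
        have := key _ hmem memL; simp [Prod.ext_iff] at this
      rw [if_neg hR, if_neg hU, if_neg hL, if_pos (show (((x, y - 1) : V), (1 : Fin 2)) ∈ M from hm)]; ring

/-- The curl identity: increments around any vertex cancel. -/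
lemma curl (M : Set E) (hM : IsPM M) (x y : ℤ) :
    D1 M (x, y) - D1 M (x, y - 1) = D0 M (x, y) - D0 M (x - 1, y) := by
  have hs := vertexSum M hM x y
  have h1 : (if (((x, y) : V), (1 : Fin 2)) ∈ M then (3 : ℤ) else -1)
      = -(if (((x, y) : V), (1 : Fin 2)) ∈ M then (-3 : ℤ) else 1) := by split <;> ring
  have h2 : (if (((x, y - 1) : V), (1 : Fin 2)) ∈ M then (3 : ℤ) else -1)
      = -(if (((x, y - 1) : V), (1 : Fin 2)) ∈ M then (-3 : ℤ) else 1) := by split <;> ring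
  unfold D0 D1
  rw [h1, h2, eps_left, eps_down]
  linear_combination (-eps (x, y)) * hs

/-- The candidate height function. -/
def hfun (M : Set E) (v : V) : ℤ :=
  sumAux (fun n => -D1 M (n, 0)) v.1 + sumAux (fun n => -D0 M (v.1, n)) v.2

lemma Gdiff (M : Set E) (hM : IsPM M) (a b : ℤ) :
    sumAux (fun n => -D0 M (a - 1, n)) b - sumAux (fun n => -D0 M (a, n)) b
      = D1 M (a, b) - D1 M (a, 0) := by
  induction b using Int.induction_on with
  | zero => simp [sumAux_zero]
  | succ k ih =>
      rw [sumAux_step, sumAux_step]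
      have hc := curl M hM a ((k : ℤ) + 1)
      rw [show ((k : ℤ) + 1) - 1 = (k : ℤ) from by ring] at hc
      linarith
  | pred k ih =>
      have s1 := sumAux_step (fun n => -D0 M (a - 1, n)) (-(k : ℤ) - 1)
      have s2 := sumAux_step (fun n => -D0 M (a, n)) (-(k : ℤ) - 1)
      rw [show (-(k : ℤ) - 1) + 1 = -(k : ℤ) from by ring] at s1 s2
      have hc := curl M hM a (-(k : ℤ))
      linarith

lemma hfun_isHeight (M : Set E) (hM : IsPM M) : IsHeight M (hfun M) := by
  intro v
  obtain ⟨a, b⟩ := v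
  constructor
  · have s := sumAux_step (fun n => -D0 M (a, n)) (b - 1)
    rw [show (b - 1) + 1 = b from by ring] at s
    have hv : ((a, b) : V) - (0, 1) = ((a, b - 1) : V) := by
      simp [Prod.ext_iff]
    rw [hv]
    show hfun M (a, b - 1) - hfun M (a, b)
        = (if (((a, b) : V), (0 : Fin 2)) ∈ M then (-3 : ℤ) else 1) * eps (a, b)
    unfold hfun
    simp only at s ⊢
    have : (if (((a, b) : V), (0 : Fin 2)) ∈ M then (-3 : ℤ) else 1) * eps (a, b)
        = D0 M (a, b) := rfl
    rw [this]
    linarith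
  · have s := sumAux_step (fun n => -D1 M (n, 0)) (a - 1)
    rw [show (a - 1) + 1 = a from by ring] at s
    have g := Gdiff M hM a b
    have hv : ((a, b) : V) - (1, 0) = ((a - 1, b) : V) := by
      simp [Prod.ext_iff]
    rw [hv]
    show hfun M (a - 1, b) - hfun M (a, b)
        = (if (((a, b) : V), (1 : Fin 2)) ∈ M then (3 : ℤ) else -1) * eps (a, b)
    unfold hfun
    simp only at s g ⊢
    have : (if (((a, b) : V), (1 : Fin 2)) ∈ M then (3 : ℤ) else -1) * eps (a, b)
        = D1 M (a, b) := rfl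
    rw [this]
    linarith

/-- For every perfect matching `M` of the infinite grid graph on `ℤ²`, a height
function for `M` exists, and it is unique up to an additive constant. -/
theorem height_exists_and_unique_up_to_constant (M : Set E) (hM : IsPM M) :
    (∃ h : V → ℤ, IsHeight M h) ∧
      (∀ h h' : V → ℤ, IsHeight M h → IsHeight M h' →
        ∃ c : ℤ, ∀ x : V, h' x = h x + c) := by
  constructor
  · exact ⟨hfun M, hfun_isHeight M hM⟩
  · intro h h' H H'
    set g : V → ℤ := fun v => h' v - h v with hg
    have hv : ∀ v : V, g (v - (0, 1)) = g v := by
      intro v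
      have t1 := (H v).1
      have t2 := (H' v).1
      simp only [hg]
      linarith
    have hh : ∀ v : V, g (v - (1, 0)) = g v := by
      intro v
      have t1 := (H v).2
      have t2 := (H' v).2
      simp only [hg]
      linarith
    have col : ∀ a b : ℤ, g (a, b) = g (a, 0) := by
      intro a b
      induction b using Int.induction_on with
      | zero => rfl
      | succ k ih =>
          have := hv ((a, (k : ℤ) + 1) : V)
          rw [show ((a, (k : ℤ) + 1) : V) - (0, 1) = ((a, (k : ℤ)) : V) from by
            simp [Prod.ext_iff]] at this
          rw [← this]; exact ih
      | pred k ih =>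
          have := hv ((a, -(k : ℤ)) : V)
          rw [show ((a, -(k : ℤ)) : V) - (0, 1) = ((a, -(k : ℤ) - 1) : V) from by
            simp [Prod.ext_iff]] at this
          rw [this]; exact ih
    have row : ∀ a : ℤ, g (a, 0) = g (0, 0) := by
      intro a
      induction a using Int.induction_on with
      | zero => rfl
      | succ k ih =>
          have := hh (((k : ℤ) + 1, 0) : V)
          rw [show (((k : ℤ) + 1, 0) : V) - (1, 0) = (((k : ℤ), 0) : V) from by
            simp [Prod.ext_iff]] at this
          rw [← this]; exact ih
      | pred k ih =>
          have := hh ((-(k : ℤ), 0) : V)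
          rw [show ((-(k : ℤ), 0) : V) - (1, 0) = ((-(k : ℤ) - 1, 0) : V) from by
            simp [Prod.ext_iff]] at this
          rw [this]; exact ih
    refine ⟨h' (0, 0) - h (0, 0), fun x => ?_⟩
    obtain ⟨a, b⟩ := x
    have h1 := col a b
    have h2 := row a
    simp only [hg] at h1 h2
    linarith

end HQDM
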